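/- The dual of the Boolean algebra 𝒫(2^ω) embeds into the Muchnik lattice as a Boolean algebra: there exists a map F from subsets of 2^ω to mass problems such that for all I, J ⊆ 2^ω: (i) if I ⊆ J then F(J) ≤_w F(I); (ii) if I ⊊ J then ¬(F(I) ≤_w F(J)); (iii) F(I ∩ J) ≡_w F(I) + F(J); and (iv) F(I ∪ J) ≡_w F(I) ∪ F(J). -/

import Mathlib

open Cardinal

namespace Muchnik

/-- Oracle partial recursiveness: `f` is partial recursive relative to the oracle `g`. -/
inductive RecursiveIn (g : ℕ → ℕ) : (ℕ →. ℕ) → Prop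
  | oracle : RecursiveIn g ↑g
  | zero : RecursiveIn g (pure 0)
  | succ : RecursiveIn g ↑Nat.succ
  | left : RecursiveIn g ↑fun n : ℕ => n.unpair.1
  | right : RecursiveIn g ↑fun n : ℕ => n.unpair.2
  | pair {f h} : RecursiveIn g f → RecursiveIn g h →
      RecursiveIn g fun n => Nat.pair <$> f n <*> h n
  | comp {f h} : RecursiveIn g f → RecursiveIn g h →
      RecursiveIn g fun n => h n >>= f
  | prec {f h} : RecursiveIn g f → RecursiveIn g h →
      RecursiveIn g (Nat.unpaired fun a n =>
        n.rec (f a) fun y IH => do let i ← IH; h (Nat.pair a (Nat.pair y i)))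
  | rfind {f} : RecursiveIn g f →
      RecursiveIn g fun a => Nat.rfind fun n => (fun m => m = 0) <$> f (Nat.pair a n)

/-- Turing reducibility `f ≤_T g` for elements of Baire space. -/
def TuringLe (f g : ℕ → ℕ) : Prop := RecursiveIn g ↑f

/-- Strict Turing reducibility `f <_T g`. -/
def TuringLt (f g : ℕ → ℕ) : Prop := TuringLe f g ∧ ¬ TuringLe g f

/-- Turing equivalence `f ≡_T g`. -/
def TuringEquiv (f g : ℕ → ℕ) : Prop := TuringLe f g ∧ TuringLe g f

/-- Turing incomparability `f |_T g`. -/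
def TuringIncomp (f g : ℕ → ℕ) : Prop := ¬ TuringLe f g ∧ ¬ TuringLe g f

/-- Muchnik reducibility `A ≤_w B` between mass problems. -/
def MuchnikLe (A B : Set (ℕ → ℕ)) : Prop := ∀ f ∈ B, ∃ g ∈ A, TuringLe g f

/-- Strict Muchnik reducibility `A <_w B`. -/
def MuchnikLt (A B : Set (ℕ → ℕ)) : Prop := MuchnikLe A B ∧ ¬ MuchnikLe B A

/-- Muchnik equivalence `A ≡_w B`. -/
def MuchnikEquiv (A B : Set (ℕ → ℕ)) : Prop := MuchnikLe A B ∧ MuchnikLe B A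

/-- The strict Turing upper cone `C'(f) = {g : f <_T g}`. -/
def cone (f : ℕ → ℕ) : Set (ℕ → ℕ) := {g | TuringLt f g}

/-- The recursive join `f ⊕ g`: `(f ⊕ g)(2x) = f(x)` and `(f ⊕ g)(2x+1) = g(x)`. -/
def join (f g : ℕ → ℕ) : ℕ → ℕ := fun n => if n % 2 = 0 then f (n / 2) else g (n / 2)

/-- The join `A + B` of mass problems. -/
def joinSet (A B : Set (ℕ → ℕ)) : Set (ℕ → ℕ) := {h | ∃ f ∈ A, ∃ g ∈ B, h = join f g}

/-- Identification of `2^ω` with a subset of Baire space. -/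
def ofBool (X : ℕ → Bool) : ℕ → ℕ := fun n => if X n then 1 else 0

/-! The proof builds a perfect family `X ↦ a X` of pairwise Turing-incomparable functions:
the branches of a Sacks-style tree of finite strings, each level of which makes every two
distinct nodes diagonalize against one oracle program (every program recurring at infinitely
many levels). This is possible because a convergent computation consults only finitely much of
its oracle. Then `I` is sent to the set of functions
lying strictly above some `a X`, or Turing equivalent to `a X` with `X ∈ I`. Such sets are
upward closed, so the join `+` of two of them is equivalent to their intersection, and since
the `a X` are incomparable, intersections and unions of the index sets are preserved. -/

end Muchnik

section PartOpen

variable {T : Type*} {α β : Type} [TopologicalSpace T]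

theorem isOpen_setOf_mem_bind {P : T → Part α} {Q : T → α → Part β}
    (hP : ∀ a, IsOpen {x | a ∈ P x}) (hQ : ∀ a b, IsOpen {x | b ∈ Q x a}) (b : β) :
    IsOpen {x | b ∈ P x >>= Q x} := by
  have : {x | b ∈ P x >>= Q x} = ⋃ a, {x | a ∈ P x} ∩ {x | b ∈ Q x a} := by
    ext x
    simp [Part.bind_eq_bind, Part.mem_bind_iff]
  rw [this]
  exact isOpen_iUnion fun a => (hP a).inter (hQ a b)

theorem isOpen_setOf_mem_map {P : T → Part α} (f : α → β) (hP : ∀ a, IsOpen {x | a ∈ P x})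
    (b : β) : IsOpen {x | b ∈ f <$> P x} := by
  have : {x | b ∈ f <$> P x} = ⋃ a, ⋃ (_ : f a = b), {x | a ∈ P x} := by
    ext x
    simp [Part.mem_map_iff, and_comm]
  rw [this]
  exact isOpen_iUnion fun a => isOpen_iUnion fun _ => hP a

end PartOpen

theorem PiNat.exists_cylinder_subset {E : ℕ → Type*} [∀ n, TopologicalSpace (E n)]
    [∀ n, DiscreteTopology (E n)] {s : Set (∀ n, E n)} {x : ∀ n, E n} (hs : IsOpen s)
    (hx : x ∈ s) : ∃ n, PiNat.cylinder x n ⊆ s := by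
  obtain ⟨_, ⟨y, n, rfl⟩, hxy, hsub⟩ :=
    (PiNat.isTopologicalBasis_cylinders E).exists_subset_of_mem_open hx hs
  exact ⟨n, PiNat.mem_cylinder_iff_eq.1 hxy ▸ hsub⟩

namespace Muchnik

theorem continuous_ofBool : Continuous ofBool :=
  continuous_pi fun n =>
    (continuous_of_discreteTopology (f := fun b : Bool => if b then 1 else 0)).comp
      (continuous_apply n)

-- Programs for `RecursiveIn`: unlike the predicate, a program can be run on different oracles.
inductive Code : Type
  | oracle | zero | succ | left | right
  | pair (a b : Code) | comp (a b : Code) | prec (a b : Code) | rfind (a : Code)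
  deriving Countable, Inhabited

def Code.eval (g : ℕ → ℕ) : Code → ℕ →. ℕ
  | .oracle => ↑g
  | .zero => pure 0
  | .succ => ↑Nat.succ
  | .left => ↑fun n : ℕ => n.unpair.1
  | .right => ↑fun n : ℕ => n.unpair.2
  | .pair a b => fun n => Nat.pair <$> a.eval g n <*> b.eval g n
  | .comp a b => fun n => b.eval g n >>= a.eval g
  | .prec a b => Nat.unpaired fun x n =>
      n.rec (a.eval g x) fun y IH => do let i ← IH; b.eval g (Nat.pair x (Nat.pair y i))
  | .rfind a => fun x => Nat.rfind fun n => (fun m => m = 0) <$> a.eval g (Nat.pair x n)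

theorem RecursiveIn.exists_code {g : ℕ → ℕ} {f : ℕ →. ℕ} (h : RecursiveIn g f) :
    ∃ c : Code, c.eval g = f := by
  induction h with
  | oracle => exact ⟨.oracle, rfl⟩
  | zero => exact ⟨.zero, rfl⟩
  | succ => exact ⟨.succ, rfl⟩
  | left => exact ⟨.left, rfl⟩
  | right => exact ⟨.right, rfl⟩
  | pair _ _ ih₁ ih₂ =>
    obtain ⟨c₁, rfl⟩ := ih₁; obtain ⟨c₂, rfl⟩ := ih₂; exact ⟨.pair c₁ c₂, rfl⟩
  | comp _ _ ih₁ ih₂ =>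
    obtain ⟨c₁, rfl⟩ := ih₁; obtain ⟨c₂, rfl⟩ := ih₂; exact ⟨.comp c₁ c₂, rfl⟩
  | prec _ _ ih₁ ih₂ =>
    obtain ⟨c₁, rfl⟩ := ih₁; obtain ⟨c₂, rfl⟩ := ih₂; exact ⟨.prec c₁ c₂, rfl⟩
  | rfind _ ih =>
    obtain ⟨c, rfl⟩ := ih; exact ⟨.rfind c, rfl⟩

/-- The use principle, in topological form. -/
theorem Code.isOpen_setOf_mem_eval (c : Code) (n m : ℕ) :
    IsOpen {g : ℕ → ℕ | m ∈ c.eval g n} := by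
  induction c generalizing n m with
  | oracle =>
    simp only [Code.eval, PFun.coe_val, Part.mem_some_iff]
    exact (isOpen_discrete {x | m = x}).preimage (continuous_apply n)
  | zero | succ | left | right => simp only [Code.eval]; exact isOpen_const
  | pair a b iha ihb =>
    simp only [Code.eval, seq_eq_bind_map]
    exact isOpen_setOf_mem_bind (isOpen_setOf_mem_map _ (iha n))
      (fun h => isOpen_setOf_mem_map h (ihb n)) m
  | comp a b iha ihb => exact isOpen_setOf_mem_bind (ihb n) (fun u => iha u) m
  | prec a b iha ihb =>
    suffices ∀ k x m : ℕ, IsOpen {g : ℕ → ℕ | m ∈ (k.rec (a.eval g x) fun y IH =>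
        IH >>= fun i => b.eval g (Nat.pair x (Nat.pair y i)) : Part ℕ)} from this _ _ m
    intro k x
    induction k with
    | zero => exact iha x
    | succ k ih => exact isOpen_setOf_mem_bind ih fun i => ihb _
  | rfind a iha =>
    have hp : ∀ k b, IsOpen {g : ℕ → ℕ |
        b ∈ (fun m => decide (m = 0)) <$> a.eval g (Nat.pair n k)} :=
      fun k => isOpen_setOf_mem_map _ (iha _)
    have : {g : ℕ → ℕ | m ∈ (Code.rfind a).eval g n} =
        {g | true ∈ (fun m => decide (m = 0)) <$> a.eval g (Nat.pair n m)} ∩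
          ⋂ k ∈ Finset.range m,
            {g | false ∈ (fun m => decide (m = 0)) <$> a.eval g (Nat.pair n k)} := by
      ext g
      simp only [Code.eval, Set.mem_ofPred_eq, Set.mem_inter_iff, Set.mem_iInter, Finset.mem_range]
      exact Nat.mem_rfind
    rw [this]
    exact (hp m true).inter (isOpen_biInter_finset fun k _ => hp k false)

section Strings

variable {α : Type*}

def IsPrefixOf (σ : List α) (A : ℕ → α) : Prop := ∀ i (h : i < σ.length), σ[i] = A i

theorem IsPrefixOf.of_prefix {σ τ : List α} {A : ℕ → α} (hτ : IsPrefixOf τ A) (h : σ <+: τ) :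
    IsPrefixOf σ A :=
  fun i hi => (h.getElem hi).trans (hτ i _)

theorem IsPrefixOf.prefix_ofFn {σ : List α} {A : ℕ → α} (h : IsPrefixOf σ A) {N : ℕ}
    (hN : σ.length ≤ N) : σ <+: List.ofFn fun i : Fin N => A i := by
  rw [List.prefix_iff_eq_take]
  refine List.ext_getElem (by simpa using hN) fun i h₁ h₂ => ?_
  simp [h i h₁]

theorem IsPrefixOf.mem_cylinder {A B : ℕ → α} {N : ℕ}
    (h : IsPrefixOf (List.ofFn fun i : Fin N => A i) B) : B ∈ PiNat.cylinder A N :=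
  fun i hi => by
    have h' := h i (by simpa using hi)
    rw [List.getElem_ofFn] at h'
    exact h'.symm

end Strings

def Code.ForcesNe (c : Code) (σ τ : List Bool) : Prop :=
  ∀ A B, IsPrefixOf σ A → IsPrefixOf τ B → c.eval (ofBool B) ≠ ↑(ofBool A)

theorem Code.ForcesNe.mono {c : Code} {σ τ σ' τ' : List Bool} (h : c.ForcesNe σ τ)
    (hσ : σ <+: σ') (hτ : τ <+: τ') : c.ForcesNe σ' τ' :=
  fun A B hA hB => h A B (hA.of_prefix hσ) (hB.of_prefix hτ)

theorem Code.exists_forcesNe (c : Code) (σ τ : List Bool) :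
    ∃ σ' τ', σ <+: σ' ∧ τ <+: τ' ∧ c.ForcesNe σ' τ' := by
  by_cases H : ∃ B m, IsPrefixOf τ B ∧ m ∈ c.eval (ofBool B) σ.length
  · obtain ⟨B, m, hτB, hm⟩ := H
    obtain ⟨N, hN⟩ := PiNat.exists_cylinder_subset
      ((c.isOpen_setOf_mem_eval σ.length m).preimage continuous_ofBool) hm
    -- answer the opposite of `m` at position `|σ|`, and freeze `B` on the use of the computation
    refine ⟨σ ++ [decide (m = 0)], List.ofFn fun i : Fin (max N τ.length) => B i,
      List.prefix_append _ _, hτB.prefix_ofFn (le_max_right _ _), ?_⟩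
    intro A B' hA hB' hAB
    have hmB' : m ∈ c.eval (ofBool B') σ.length :=
      hN (PiNat.cylinder_anti B (le_max_left _ _) hB'.mem_cylinder)
    have hAσ : A σ.length = decide (m = 0) := by simpa using (hA σ.length (by simp)).symm
    rw [hAB] at hmB'
    by_cases hm0 : m = 0 <;> simp_all [ofBool]
  · refine ⟨σ, τ, List.prefix_refl _, List.prefix_refl _, fun A B _ hB hAB => H ?_⟩
    exact ⟨B, ofBool A σ.length, hB, hAB ▸ Part.mem_some _⟩

theorem exists_pairwise_of_dense {α ι : Type*} [Finite ι] {R : List α → List α → Prop}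
    (mono : ∀ {σ τ σ' τ'}, σ <+: σ' → τ <+: τ' → R σ τ → R σ' τ')
    (dense : ∀ σ τ, ∃ σ' τ', σ <+: σ' ∧ τ <+: τ' ∧ R σ' τ') (ν : ι → List α) :
    ∃ ν' : ι → List α, (∀ i, ν i <+: ν' i) ∧ ∀ i j, i ≠ j → R (ν' i) (ν' j) := by
  classical
  have : Fintype ι := Fintype.ofFinite ι
  suffices ∀ s : Finset (ι × ι), ∃ ν' : ι → List α, (∀ i, ν i <+: ν' i) ∧
      ∀ p ∈ s, p.1 ≠ p.2 → R (ν' p.1) (ν' p.2) by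
    obtain ⟨ν', hν, hR⟩ := this Finset.univ
    exact ⟨ν', hν, fun i j hij => hR (i, j) (Finset.mem_univ _) hij⟩
  intro s
  induction s using Finset.induction_on with
  | empty => exact ⟨ν, fun i => List.prefix_refl _, by simp⟩
  | insert p s _ ih =>
    obtain ⟨ν₁, hν₁, hR₁⟩ := ih
    by_cases hp : p.1 = p.2
    · exact ⟨ν₁, hν₁, fun q hq hne => (Finset.mem_insert.1 hq).elim
        (fun h => absurd (h ▸ hp) hne) (hR₁ q · hne)⟩
    obtain ⟨σ, τ, hσ, hτ, hστ⟩ := dense (ν₁ p.1) (ν₁ p.2)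
    let ν' i := if i = p.2 then τ else if i = p.1 then σ else ν₁ i
    have hν' : ∀ i, ν₁ i <+: ν' i := by
      intro i
      by_cases h₂ : i = p.2
      · subst h₂; simpa [ν'] using hτ
      by_cases h₁ : i = p.1
      · subst h₁; simpa [ν', h₂] using hσ
      simp [ν', h₁, h₂]
    refine ⟨ν', fun i => (hν₁ i).trans (hν' i), fun q hq hne => ?_⟩
    rcases Finset.mem_insert.1 hq with rfl | hq
    · simpa [ν', hp] using hστ
    · exact mono (hν' _) (hν' _) (hR₁ q hq hne)

section PerfectTree

variable (next : ∀ s, ((Fin s → Bool) → List Bool) → (Fin (s + 1) → Bool) → List Bool)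

def levels : ∀ s, (Fin s → Bool) → List Bool
  | 0 => fun _ => []
  | s + 1 => next s (levels s)

def branch (X : ℕ → Bool) (n : ℕ) : Bool := (levels next (n + 1) fun i => X i).getD n false

variable {next}

theorem le_length_levels (hnext : ∀ s L v, L (Fin.init v) ++ [false] <+: next s L v) (s : ℕ)
    (v : Fin s → Bool) : s ≤ (levels next s v).length := by
  induction s with
  | zero => exact Nat.zero_le _
  | succ s ih =>
    have := (hnext s (levels next s) v).length_le
    simp only [List.length_append, List.length_singleton] at this
    exact (Nat.succ_le_succ (ih _)).trans this

theorem levels_prefix (hnext : ∀ s L v, L (Fin.init v) ++ [false] <+: next s L v)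
    (X : ℕ → Bool) {s t : ℕ} (h : s ≤ t) :
    (levels next s fun i => X i) <+: levels next t fun i => X i := by
  induction t, h using Nat.le_induction with
  | base => exact List.prefix_refl _
  | succ t _ ih =>
    exact ih.trans ((List.prefix_append _ _).trans (hnext t (levels next t) fun i => X i))

theorem isPrefixOf_branch (hnext : ∀ s L v, L (Fin.init v) ++ [false] <+: next s L v)
    (X : ℕ → Bool) (s : ℕ) : IsPrefixOf (levels next s fun i => X i) (branch next X) := by
  intro i hi
  have hi' : i < (levels next (i + 1) fun j => X j).length :=
    Nat.lt_of_lt_of_le (Nat.lt_succ_self i) (le_length_levels hnext _ _)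
  rw [branch, List.getD_eq_getElem _ _ hi']
  rcases le_total s (i + 1) with h | h
  · exact (levels_prefix hnext X h).getElem hi
  · exact ((levels_prefix hnext X h).getElem hi').symm

end PerfectTree

theorem exists_family_pairwise_of_dense {R : ℕ → List Bool → List Bool → Prop}
    (mono : ∀ s {σ τ σ' τ'}, σ <+: σ' → τ <+: τ' → R s σ τ → R s σ' τ')
    (dense : ∀ s σ τ, ∃ σ' τ', σ <+: σ' ∧ τ <+: τ' ∧ R s σ' τ') :
    ∃ a : (ℕ → Bool) → ℕ → Bool, ∀ s X Y, (∃ i ≤ s, X i ≠ Y i) →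
      ∃ σ τ, IsPrefixOf σ (a X) ∧ IsPrefixOf τ (a Y) ∧ R s σ τ := by
  -- appending `false` only serves to make the nodes grow, so that the branches are infinite
  have step : ∀ s (L : (Fin s → Bool) → List Bool), ∃ L' : (Fin (s + 1) → Bool) → List Bool,
      (∀ v, L (Fin.init v) ++ [false] <+: L' v) ∧ ∀ v w, v ≠ w → R s (L' v) (L' w) :=
    fun s L => exists_pairwise_of_dense (mono s) (dense s) _
  choose next hnext hsep using step
  refine ⟨branch next, fun s X Y ⟨i, hi, hXY⟩ => ⟨_, _, isPrefixOf_branch hnext X (s + 1),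
    isPrefixOf_branch hnext Y (s + 1), hsep s _ _ _ fun h => hXY ?_⟩⟩
  exact congrFun h ⟨i, Nat.lt_succ_of_le hi⟩

def IsTuringAntichain {ι : Type*} (a : ι → ℕ → ℕ) : Prop := ∀ X Y, TuringLe (a X) (a Y) → X = Y

theorem exists_isTuringAntichain : ∃ a : (ℕ → Bool) → ℕ → ℕ, IsTuringAntichain a := by
  obtain ⟨e, he⟩ := exists_surjective_nat Code
  -- every code `e k` is diagonalized against at the arbitrarily late levels `Nat.pair k i`
  obtain ⟨a, ha⟩ := exists_family_pairwise_of_dense (R := fun s => (e s.unpair.1).ForcesNe)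
    (fun _ _ _ _ _ hσ hτ h => h.mono hσ hτ) (fun s => (e s.unpair.1).exists_forcesNe)
  refine ⟨fun X => ofBool (a X), fun X Y hle => by_contra fun hne => ?_⟩
  obtain ⟨i, hi⟩ := Function.ne_iff.1 hne
  obtain ⟨c, hc⟩ := RecursiveIn.exists_code hle
  obtain ⟨k, rfl⟩ := he c
  obtain ⟨σ, τ, hσ, hτ, hforce⟩ := ha (Nat.pair k i) X Y ⟨i, Nat.right_le_pair k i, hi⟩
  rw [Nat.unpair_pair] at hforce
  exact hforce _ _ hσ hτ hc

theorem RecursiveIn.of_partrec {f : ℕ →. ℕ} (hf : Nat.Partrec f) (g : ℕ → ℕ) :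
    RecursiveIn g f := by
  induction hf with
  | zero => exact .zero
  | succ => exact .succ
  | left => exact .left
  | right => exact .right
  | pair _ _ ih₁ ih₂ => exact .pair ih₁ ih₂
  | comp _ _ ih₁ ih₂ => exact .comp ih₁ ih₂
  | prec _ _ ih₁ ih₂ => exact .prec ih₁ ih₂
  | rfind _ ih => exact .rfind ih

theorem RecursiveIn.trans {f : ℕ →. ℕ} {g h : ℕ → ℕ} (hf : RecursiveIn g f)
    (hg : RecursiveIn h ↑g) : RecursiveIn h f := by
  induction hf with
  | oracle => exact hg
  | zero => exact .zero
  | succ => exact .succ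
  | left => exact .left
  | right => exact .right
  | pair _ _ ih₁ ih₂ => exact .pair ih₁ ih₂
  | comp _ _ ih₁ ih₂ => exact .comp ih₁ ih₂
  | prec _ _ ih₁ ih₂ => exact .prec ih₁ ih₂
  | rfind _ ih => exact .rfind ih

theorem TuringLe.refl (f : ℕ → ℕ) : TuringLe f f := RecursiveIn.oracle

theorem TuringLe.trans {f g h : ℕ → ℕ} (hfg : TuringLe f g) (hgh : TuringLe g h) :
    TuringLe f h :=
  RecursiveIn.trans hfg hgh

theorem turingLe_comp_of_primrec (g : ℕ → ℕ) {u : ℕ → ℕ} (hu : Primrec u) :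
    TuringLe (g ∘ u) g := by
  have h := RecursiveIn.comp (@RecursiveIn.oracle g)
    (RecursiveIn.of_partrec (Nat.Partrec.of_primrec (Primrec.nat_iff.1 hu)) g)
  have heq : (fun n => (u : ℕ →. ℕ) n >>= (g : ℕ →. ℕ)) = ((g ∘ u : ℕ → ℕ) : ℕ →. ℕ) :=
    funext fun n => Part.bind_some (u n) _
  rwa [heq] at h

theorem turingLe_join_left (f g : ℕ → ℕ) : TuringLe f (join f g) := by
  convert turingLe_comp_of_primrec (join f g) (Primrec.nat_mul.comp (Primrec.const 2) .id)
  funext n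
  simp [join]

theorem turingLe_join_right (f g : ℕ → ℕ) : TuringLe g (join f g) := by
  convert turingLe_comp_of_primrec (join f g)
    (Primrec.succ.comp (Primrec.nat_mul.comp (Primrec.const 2) .id))
  funext n
  have : (2 * n + 1) / 2 = n := by omega
  simp [join, this]

theorem join_self_turingLe (f : ℕ → ℕ) : TuringLe (join f f) f := by
  convert turingLe_comp_of_primrec f (Primrec.nat_div.comp .id (Primrec.const 2))
  funext n
  simp [join]

theorem muchnikLe_of_subset {A B : Set (ℕ → ℕ)} (h : B ⊆ A) : MuchnikLe A B :=
  fun f hf => ⟨f, h hf, TuringLe.refl f⟩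

theorem MuchnikEquiv.refl (A : Set (ℕ → ℕ)) : MuchnikEquiv A A :=
  ⟨muchnikLe_of_subset le_rfl, muchnikLe_of_subset le_rfl⟩

theorem muchnikEquiv_inter_joinSet {A B : Set (ℕ → ℕ)}
    (hA : ∀ f ∈ A, ∀ g, TuringLe f g → g ∈ A) (hB : ∀ f ∈ B, ∀ g, TuringLe f g → g ∈ B) :
    MuchnikEquiv (A ∩ B) (joinSet A B) := by
  constructor
  · rintro _ ⟨f, hf, g, hg, rfl⟩
    exact ⟨join f g, ⟨hA f hf _ (turingLe_join_left f g), hB g hg _ (turingLe_join_right f g)⟩,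
      TuringLe.refl _⟩
  · rintro f ⟨hfA, hfB⟩
    exact ⟨join f f, ⟨f, hfA, f, hfB, rfl⟩, join_self_turingLe f⟩

section MassProblem

variable {ι : Type*} {a : ι → ℕ → ℕ} {I J : Set ι}

def massProblem (a : ι → ℕ → ℕ) (I : Set ι) : Set (ℕ → ℕ) :=
  {f | ∃ X, TuringLe (a X) f ∧ (X ∈ I ∨ ¬ TuringLe f (a X))}

theorem apply_mem_massProblem {X : ι} (hX : X ∈ I) : a X ∈ massProblem a I :=
  ⟨X, TuringLe.refl _, .inl hX⟩

theorem massProblem_mono (h : I ⊆ J) : massProblem a I ⊆ massProblem a J :=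
  fun _ ⟨X, hle, hX⟩ => ⟨X, hle, hX.imp_left (@h X)⟩

theorem mem_massProblem_of_turingLe {f g : ℕ → ℕ} (hf : f ∈ massProblem a I)
    (hfg : TuringLe f g) : g ∈ massProblem a I := by
  obtain ⟨X, hle, hX⟩ := hf
  exact ⟨X, hle.trans hfg, hX.imp_right fun hnle hg => hnle (hfg.trans hg)⟩

theorem massProblem_union : massProblem a (I ∪ J) = massProblem a I ∪ massProblem a J := by
  ext f
  constructor
  · rintro ⟨X, hle, (hI | hJ) | hnle⟩
    · exact .inl ⟨X, hle, .inl hI⟩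
    · exact .inr ⟨X, hle, .inl hJ⟩
    · exact .inl ⟨X, hle, .inr hnle⟩
  · rintro (hf | hf)
    · exact massProblem_mono Set.subset_union_left hf
    · exact massProblem_mono Set.subset_union_right hf

theorem massProblem_inter (ha : IsTuringAntichain a) :
    massProblem a (I ∩ J) = massProblem a I ∩ massProblem a J := by
  refine (Set.subset_inter (massProblem_mono Set.inter_subset_left)
    (massProblem_mono Set.inter_subset_right)).antisymm ?_
  rintro f ⟨⟨X, hX, hXI | hnX⟩, ⟨Y, hY, hYJ | hnY⟩⟩
  · by_cases hfX : TuringLe f (a X)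
    · obtain rfl := ha Y X (hY.trans hfX)
      exact ⟨Y, hY, .inl ⟨hXI, hYJ⟩⟩
    · exact ⟨X, hX, .inr hfX⟩
  · exact ⟨Y, hY, .inr hnY⟩
  · exact ⟨X, hX, .inr hnX⟩
  · exact ⟨X, hX, .inr hnX⟩

theorem not_muchnikLe_massProblem_of_ssubset (ha : IsTuringAntichain a) (h : I ⊂ J) :
    ¬ MuchnikLe (massProblem a I) (massProblem a J) := by
  intro hle
  obtain ⟨X, hXJ, hXI⟩ := Set.exists_of_ssubset h
  obtain ⟨f, ⟨Y, hYf, hY⟩, hfX⟩ := hle (a X) (apply_mem_massProblem hXJ)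
  obtain rfl := ha Y X (hYf.trans hfX)
  exact hY.elim hXI (· hfX)

end MassProblem

/-- The dual of the Boolean algebra `𝒫(2^ω)` embeds into the Muchnik lattice as a Boolean
algebra: there is a map `F` from subsets of `2^ω` to mass problems that is order-reversing
and injective on the order, sends intersections to joins `+`, and unions to meets `∪`. -/
theorem embed_dual_powerset_muchnik :
    ∃ F : Set (ℕ → Bool) → Set (ℕ → ℕ),
      (∀ I J : Set (ℕ → Bool), I ⊆ J → MuchnikLe (F J) (F I)) ∧
      (∀ I J : Set (ℕ → Bool), I ⊂ J → ¬ MuchnikLe (F I) (F J)) ∧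
      (∀ I J : Set (ℕ → Bool), MuchnikEquiv (F (I ∩ J)) (joinSet (F I) (F J))) ∧
      (∀ I J : Set (ℕ → Bool), MuchnikEquiv (F (I ∪ J)) (F I ∪ F J)) := by
  obtain ⟨a, ha⟩ := exists_isTuringAntichain
  refine ⟨massProblem a, fun I J h => muchnikLe_of_subset (massProblem_mono h),
    fun I J h => not_muchnikLe_massProblem_of_ssubset ha h, fun I J => ?_, fun I J => ?_⟩
  · rw [massProblem_inter ha]
    exact muchnikEquiv_inter_joinSet (fun _ hf _ => mem_massProblem_of_turingLe hf)
      (fun _ hf _ => mem_massProblem_of_turingLe hf)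
  · rw [massProblem_union]
    exact MuchnikEquiv.refl _

end Muchnik
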